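/- arXiv:2512.02570 — 4 statements merged into one kernel-verified Lean document; each statement's English description precedes it below -/
import Mathlib

section
/- If k ∈ Ξ_min, then there exist non-negative integers (r_σ)_{σ∈I} such that (p^f − 1)·k = Σ_{σ∈I} r_σ·h_σ. (This expresses that the minimal cone is contained in the non-negative rational cone spanned by the partial Hasse invariant weight vectors, in the integral form used in the paper: N·k lies in the non-negative integral span of the h_σ, where N = p^f − 1.) -/
open scoped BigOperators

/-- The index set `I = (ℤ/fℤ) × {1,…,e}` of embeddings, with the second factor
0-indexed: `(i, j) : Idx e f` corresponds to the pair `(i, j+1)` of the paper. -/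
abbrev Idx (e f : ℕ) := ZMod f × Fin e

/-- `ν_σ = p` if `σ = (i,1)` (i.e. the 0-indexed second component is `0`),
and `ν_σ = 1` otherwise. -/
def nu (p e f : ℕ) (σ : Idx e f) : ℤ := if (σ.2 : ℕ) = 0 then (p : ℤ) else 1

/-- The cyclic permutation `φ` of `I`: `φ(i,j) = (i,j+1)` for `j < e` and
`φ(i,e) = (i+1,1)` (in the paper's 1-indexed notation). -/
def phi (e f : ℕ) (σ : Idx e f) : Idx e f :=
  if h : (σ.2 : ℕ) + 1 < e then (σ.1, ⟨(σ.2 : ℕ) + 1, h⟩)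
  else (σ.1 + 1, ⟨0, σ.2.pos⟩)

/-- The inverse `φ⁻¹` of the cyclic permutation `φ`, given by its explicit
formula: `φ⁻¹(i,j) = (i,j-1)` for `j > 1` and `φ⁻¹(i,1) = (i-1,e)`
(in the paper's 1-indexed notation). -/
def phiInv (e f : ℕ) (σ : Idx e f) : Idx e f :=
  if (σ.2 : ℕ) = 0 then (σ.1 - 1, ⟨e - 1, Nat.sub_lt σ.2.pos one_pos⟩)
  else (σ.1, ⟨(σ.2 : ℕ) - 1, lt_of_le_of_lt (Nat.sub_le _ 1) σ.2.isLt⟩)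

/-- The partial Hasse invariant weight vector `h_σ = ν_σ·𝐞_{φ⁻¹(σ)} − 𝐞_σ ∈ ℤ^I`. -/
def hvec (p e f : ℕ) (σ : Idx e f) : Idx e f → ℤ :=
  fun ρ => nu p e f σ * (if ρ = phiInv e f σ then 1 else 0) - (if ρ = σ then 1 else 0)

/-- The minimal cone `Ξ_min = { k ∈ ℤ^I : ν_σ·k_σ ≥ k_{φ⁻¹(σ)} for all σ ∈ I }`. -/
def XiMin (p e f : ℕ) : Set (Idx e f → ℤ) :=
  {k | ∀ σ : Idx e f, k (phiInv e f σ) ≤ nu p e f σ * k σ}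

/-! In coordinates, `∑ σ, r σ • h_σ = (p ^ f - 1) • k` reads
`ν_{φ ρ} r_{φ ρ} - r_ρ = (p ^ f - 1) k_ρ`. Following the cycle `φ`, the sum
`r_ρ = ∑_{m < ef} (ν_{φ ρ} ⋯ ν_{φ^m ρ}) k_{φ^m ρ}` telescopes to a solution, because the
product of `ν` over the whole cycle is `p ^ f`. It is non-negative because `k ≥ 0` on `Ξ_min`:
chaining the defining inequalities once around the cycle gives `k_ρ ≤ p ^ f k_ρ`. -/

open Finset

section OrbitWeight

variable {α R : Type*} (φ : α → α)

def orbitWeight [CommMonoid R] (ν : α → R) (x : α) (n : ℕ) : R :=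
  ∏ l ∈ range n, ν (φ^[l + 1] x)

def orbitSum [CommSemiring R] (ν k : α → R) (x : α) (n : ℕ) : R :=
  ∑ m ∈ range n, orbitWeight φ ν x m * k (φ^[m] x)

lemma orbitWeight_succ [CommMonoid R] (ν : α → R) (x : α) (n : ℕ) :
    orbitWeight φ ν x (n + 1) = ν (φ x) * orbitWeight φ ν (φ x) n := by
  simp only [orbitWeight, prod_range_succ', Function.iterate_succ_apply,
    Function.iterate_zero_apply, mul_comm]

lemma orbitWeight_add [CommMonoid R] (ν : α → R) (x : α) (m n : ℕ) :
    orbitWeight φ ν x (m + n) = orbitWeight φ ν x m * orbitWeight φ ν (φ^[m] x) n := by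
  rw [orbitWeight, orbitWeight, orbitWeight, prod_range_add]
  refine congrArg _ (prod_congr rfl fun l _ => ?_)
  rw [show m + l + 1 = l + 1 + m by omega, Function.iterate_add_apply]

lemma orbitSum_nonneg [CommSemiring R] [PartialOrder R] [IsOrderedRing R] {ν k : α → R}
    (hν : ∀ y, 0 ≤ ν y) (hk : ∀ y, 0 ≤ k y) (x : α) (n : ℕ) : 0 ≤ orbitSum φ ν k x n :=
  sum_nonneg fun _ _ => mul_nonneg (prod_nonneg fun _ _ => hν _) (hk _)

lemma mul_orbitSum_sub_orbitSum [CommRing R] (ν k : α → R) {x : α} {n : ℕ}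
    (hx : φ^[n] x = x) :
    ν (φ x) * orbitSum φ ν k (φ x) n - orbitSum φ ν k x n = (orbitWeight φ ν x n - 1) * k x := by
  have hshift : ν (φ x) * orbitSum φ ν k (φ x) n
      = ∑ m ∈ range n, orbitWeight φ ν x (m + 1) * k (φ^[m + 1] x) := by
    simp only [orbitSum, mul_sum, orbitWeight_succ, Function.iterate_succ_apply, mul_assoc]
  rw [hshift, orbitSum, ← sum_sub_distrib,
    sum_range_sub (fun m => orbitWeight φ ν x m * k (φ^[m] x)), hx]
  simp [orbitWeight, sub_mul]

lemma le_orbitWeight_mul_iterate [CommSemiring R] [PartialOrder R] [IsOrderedRing R]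
    {ν k : α → R} (hν : ∀ y, 0 ≤ ν y) (hk : ∀ y, k y ≤ ν (φ y) * k (φ y)) (x : α) (n : ℕ) :
    k x ≤ orbitWeight φ ν x n * k (φ^[n] x) := by
  induction n with
  | zero => simp [orbitWeight]
  | succ n ih =>
    calc k x ≤ orbitWeight φ ν x n * k (φ^[n] x) := ih
      _ ≤ orbitWeight φ ν x n * (ν (φ^[n + 1] x) * k (φ^[n + 1] x)) := by
        rw [Function.iterate_succ_apply']
        exact mul_le_mul_of_nonneg_left (hk _) (prod_nonneg fun _ _ => hν _)
      _ = orbitWeight φ ν x (n + 1) * k (φ^[n + 1] x) := by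
        rw [orbitWeight, orbitWeight, prod_range_succ, mul_assoc]

end OrbitWeight

section Hasse

variable {p e f : ℕ}

lemma phiInv_phi (σ : Idx e f) : phiInv e f (phi e f σ) = σ := by
  obtain ⟨i, j⟩ := σ
  by_cases h : (j : ℕ) + 1 < e
  · simp [phi, phiInv, h]
  · simp only [phi, h, phiInv, dite_false, if_true, add_sub_cancel_right]
    exact Prod.ext rfl (Fin.ext (by dsimp only; omega))

lemma phi_phiInv (σ : Idx e f) : phi e f (phiInv e f σ) = σ := by
  obtain ⟨i, j⟩ := σ
  by_cases h : (j : ℕ) = 0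
  · simp only [phiInv, h, if_true, phi, show ¬ e - 1 + 1 < e by omega, dite_false, sub_add_cancel]
    exact Prod.ext rfl (Fin.ext h.symm)
  · simp only [phiInv, h, if_false, phi, show (j : ℕ) - 1 + 1 < e by omega, dite_true]
    exact Prod.ext rfl (Fin.ext (by dsimp only; omega))

lemma phi_iterate_apply (i : ZMod f) (j : Fin e) (m : ℕ) :
    (phi e f)^[m] (i, j) =
      (i + (((j : ℕ) + m) / e : ℕ), ⟨((j : ℕ) + m) % e, Nat.mod_lt _ j.pos⟩) := by
  have he := j.pos
  induction m with
  | zero => simp [Nat.div_eq_of_lt j.isLt, Nat.mod_eq_of_lt j.isLt]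
  | succ m ih =>
    have hdiv := Nat.mod_add_div ((j : ℕ) + m) e
    have hlt := Nat.mod_lt ((j : ℕ) + m) he
    rw [Function.iterate_succ_apply', ih, phi]
    dsimp only
    split_ifs with h
    · obtain ⟨hq, hr⟩ := (Nat.div_mod_unique (a := (j : ℕ) + (m + 1)) he).2
        ⟨(by omega : ((j : ℕ) + m) % e + 1 + e * (((j : ℕ) + m) / e) = _), h⟩
      rw [hq]
      exact Prod.ext rfl (Fin.ext hr.symm)
    · obtain ⟨hq, hr⟩ := (Nat.div_mod_unique (a := (j : ℕ) + (m + 1)) he).2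
        ⟨(by rw [mul_add_one]; omega : 0 + e * (((j : ℕ) + m) / e + 1) = _), he⟩
      rw [hq]
      exact Prod.ext (by push_cast; ring) (Fin.ext hr.symm)

lemma phi_iterate_mul_apply (σ : Idx e f) (n : ℕ) : (phi e f)^[e * n] σ = (σ.1 + n, σ.2) := by
  obtain ⟨hq, hr⟩ := (Nat.div_mod_unique σ.2.pos).2 (⟨rfl, σ.2.isLt⟩ : (σ.2 : ℕ) + e * n = _ ∧ _)
  rw [phi_iterate_apply, hq]
  exact Prod.ext rfl (Fin.ext hr)

lemma phi_iterate_mul_self (σ : Idx e f) : (phi e f)^[e * f] σ = σ := by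
  simp [phi_iterate_mul_apply]

lemma nu_phi_iterate_apply (i : ZMod f) (j : Fin e) (m : ℕ) :
    nu p e f ((phi e f)^[m] (i, j)) = if ((j : ℕ) + m) % e = 0 then (p : ℤ) else 1 := by
  simp [nu, phi_iterate_apply]

/-- Among `e` consecutive steps of `φ` exactly one lands on some `(i, 1)`. -/
lemma orbitWeight_phi_nu (σ : Idx e f) : orbitWeight (phi e f) (nu p e f) σ e = p := by
  obtain ⟨i, j⟩ := σ
  have hj := j.isLt
  rw [orbitWeight, prod_eq_single_of_mem (e - 1 - j) (mem_range.2 (by omega))]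
  · rw [nu_phi_iterate_apply, if_pos]
    rw [show (j : ℕ) + (e - 1 - j + 1) = e by omega, Nat.mod_self]
  · intro l hl hne
    rw [mem_range] at hl
    rw [nu_phi_iterate_apply, if_neg]
    rcases lt_or_ge ((j : ℕ) + (l + 1)) e with h | h
    · rw [Nat.mod_eq_of_lt h]; omega
    · rw [Nat.mod_eq_sub_mod h, Nat.mod_eq_of_lt (by omega)]; omega

lemma orbitWeight_phi_nu_mul (σ : Idx e f) (n : ℕ) :
    orbitWeight (phi e f) (nu p e f) σ (e * n) = (p : ℤ) ^ n := by
  induction n with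
  | zero => simp [orbitWeight]
  | succ n ih => rw [mul_add_one, orbitWeight_add, ih, orbitWeight_phi_nu, pow_succ]

lemma nu_nonneg (σ : Idx e f) : 0 ≤ nu p e f σ := by
  unfold nu; split_ifs <;> positivity

lemma le_nu_phi_mul_of_mem_XiMin {k : Idx e f → ℤ} (hk : k ∈ XiMin p e f) (σ : Idx e f) :
    k σ ≤ nu p e f (phi e f σ) * k (phi e f σ) := by
  simpa [phiInv_phi] using hk (phi e f σ)

lemma nonneg_of_mem_XiMin [NeZero f] (hp : 1 < p) {k : Idx e f → ℤ} (hk : k ∈ XiMin p e f)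
    (σ : Idx e f) : 0 ≤ k σ := by
  have hcycle :=
    le_orbitWeight_mul_iterate (phi e f) nu_nonneg (le_nu_phi_mul_of_mem_XiMin hk) σ (e * f)
  rw [orbitWeight_phi_nu_mul, phi_iterate_mul_self] at hcycle
  have hpf : 1 < (p : ℤ) ^ f := one_lt_pow₀ (by exact_mod_cast hp) (NeZero.ne f)
  nlinarith

lemma sum_mul_hvec [NeZero f] (r : Idx e f → ℤ) (ρ : Idx e f) :
    ∑ σ, r σ * hvec p e f σ ρ = nu p e f (phi e f ρ) * r (phi e f ρ) - r ρ := by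
  have hinv : ∀ σ, ρ = phiInv e f σ ↔ σ = phi e f ρ := fun σ =>
    ⟨fun h => h ▸ (phi_phiInv σ).symm, fun h => h ▸ (phiInv_phi ρ).symm⟩
  simp [hvec, hinv, eq_comm (a := ρ), mul_sub, mul_comm]

end Hasse

theorem xiMin_mem_hasse_cone_general (p e f : ℕ) (hp : p.Prime) [NeZero f]
    (k : Idx e f → ℤ) (hk : k ∈ XiMin p e f) :
    ∃ r : Idx e f → ℕ,
      ∀ ρ : Idx e f, ((p : ℤ) ^ f - 1) * k ρ = ∑ σ : Idx e f, (r σ : ℤ) * hvec p e f σ ρ := by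
  set r := fun ρ => orbitSum (phi e f) (nu p e f) k ρ (e * f)
  have hr : ∀ ρ, 0 ≤ r ρ := fun ρ =>
    orbitSum_nonneg (phi e f) nu_nonneg (nonneg_of_mem_XiMin hp.one_lt hk) ρ (e * f)
  refine ⟨fun ρ => (r ρ).toNat, fun ρ => ?_⟩
  simp only [Int.toNat_of_nonneg (hr _)]
  rw [sum_mul_hvec, mul_orbitSum_sub_orbitSum _ _ _ (phi_iterate_mul_self ρ),
    orbitWeight_phi_nu_mul]

/-- If `k ∈ Ξ_min`, then there exist non-negative integers `(r_σ)_{σ∈I}` with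
`(p^f − 1)·k = Σ_{σ∈I} r_σ·h_σ`: the minimal cone lies in the non-negative
rational cone spanned by the partial Hasse invariant weight vectors. -/
theorem xiMin_mem_hasse_cone (p e f : ℕ) (hp : p.Prime) (he : 0 < e) [NeZero f]
    (k : Idx e f → ℤ) (hk : k ∈ XiMin p e f) :
    ∃ r : Idx e f → ℕ,
      ∀ ρ : Idx e f, ((p : ℤ) ^ f - 1) * k ρ = ∑ σ : Idx e f, (r σ : ℤ) * hvec p e f σ ρ :=
  xiMin_mem_hasse_cone_general p e f hp k hk
end

section
/- A vector k ∈ ℤ^I lies in the subgroup Σ_{σ∈I} ℤ·h_σ generated by the partial Hasse invariant weight vectors if and only if Σ_{(i,j)∈I} k_{(i,j)}·p^ĩ ≡ 0 (mod p^f − 1), where ĩ ∈ {0,…,f−1} denotes the representative of i ∈ ℤ/fℤ (the condition is independent of the choice of representatives, since p^f ≡ 1 mod p^f − 1). (This identifies the lattice spanned by the h_σ with the kernel of the character-weight map λ used in the paper to show that geometric modularity of weight (k,m) depends on m only through an associated mod p character.) -/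
open scoped BigOperators

/-!
In `ℤ^I ⧸ Σ ℤ·h_σ` the relation `h_σ ≡ 0` reads `[𝐞_σ] = ν_σ·[𝐞_{φ⁻¹(σ)}]`. Walking backwards
along the cycle `φ` from `(i,j)` to `(0,1)` picks up one factor `p` for each `i`, so
`[𝐞_{(i,j)}] = p^ĩ·[𝐞_{(0,1)}]`, and going once around the whole cycle gives
`(p^f − 1)·[𝐞_{(0,1)}] = 0`. Hence `[k] = λ(k)·[𝐞_{(0,1)}]` with `λ(k) = Σ k_{(i,j)}·p^ĩ`, which
vanishes when `p^f − 1 ∣ λ(k)`. Conversely `λ(h_σ) ≡ 0 (mod p^f − 1)` because `p^f ≡ 1`.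
-/

theorem pow_sub_one_dvd_pow_sub_pow_of_modEq {R : Type*} [CommRing R] (x : R) {n a b : ℕ}
    (h : a ≡ b [MOD n]) : x ^ n - 1 ∣ x ^ a - x ^ b := by
  have reduce (c : ℕ) : x ^ n - 1 ∣ x ^ c - x ^ (c % n) := by
    have hc : x ^ c = x ^ (c % n) * x ^ (n * (c / n)) := by rw [← pow_add, Nat.mod_add_div]
    rw [hc, ← mul_sub_one]
    exact (pow_one_sub_dvd_pow_mul_sub_one x n _).mul_left _
  have hab : x ^ a - x ^ b = (x ^ a - x ^ (a % n)) - (x ^ b - x ^ (b % n)) := by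
    rw [show a % n = b % n from h]
    ring
  exact hab ▸ dvd_sub (reduce a) (reduce b)

section HasseLattice

variable {p e f : ℕ}

abbrev hasseLattice (p e f : ℕ) : Submodule ℤ (Idx e f → ℤ) :=
  Submodule.span ℤ (Set.range (hvec p e f))

theorem hvec_eq_sub (σ : Idx e f) :
    hvec p e f σ = nu p e f σ • Pi.single (phiInv e f σ) 1 - Pi.single σ 1 := by
  ext ρ
  simp [hvec, Pi.single_apply]

local notation "cls" σ => Submodule.Quotient.mk (p := hasseLattice p e f) (Pi.single σ (1 : ℤ))

theorem mk_single_eq_nu_smul (σ : Idx e f) :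
    (cls σ) = nu p e f σ • cls (phiInv e f σ) := by
  rw [← Submodule.Quotient.mk_smul, Submodule.Quotient.eq, ← neg_mem_iff, neg_sub,
    ← hvec_eq_sub]
  exact Submodule.subset_span (Set.mem_range_self σ)

theorem mk_single_eq_mk_single_zero (he : 0 < e) (i : ZMod f) (j : Fin e) :
    (cls (i, j)) = cls (i, ⟨0, he⟩) := by
  obtain ⟨m, hm⟩ := j
  induction m with
  | zero => rfl
  | succ m ih =>
    rw [mk_single_eq_nu_smul, ← ih (by omega)]
    simp [nu, phiInv]

theorem mk_single_natCast_eq_pow_smul (he : 0 < e) (n : ℕ) :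
    (cls ((n : ZMod f), ⟨0, he⟩)) = (p : ℤ) ^ n • cls ((0 : ZMod f), ⟨0, he⟩) := by
  induction n with
  | zero => simp
  | succ n ih =>
    have hprev : phiInv e f (((n + 1 : ℕ) : ZMod f), ⟨0, he⟩) =
        ((n : ZMod f), ⟨e - 1, by omega⟩) := by
      simp [phiInv]
    rw [mk_single_eq_nu_smul, hprev, mk_single_eq_mk_single_zero he, ih, smul_smul]
    simp [nu, pow_succ']

theorem pow_sub_one_smul_mk_single_zero (he : 0 < e) :
    ((p : ℤ) ^ f - 1) • (cls ((0 : ZMod f), ⟨0, he⟩)) = 0 := by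
  have hcycle := mk_single_natCast_eq_pow_smul (p := p) (f := f) he f
  rw [ZMod.natCast_self] at hcycle
  rw [sub_smul, ← hcycle, one_smul, sub_self]

variable [NeZero f]

/-- The character-weight map `λ` of the paper. -/
def charWeight (p e f : ℕ) [NeZero f] : (Idx e f → ℤ) →ₗ[ℤ] ℤ :=
  Fintype.linearCombination ℤ fun σ => (p : ℤ) ^ σ.1.val

theorem charWeight_apply (k : Idx e f → ℤ) :
    charWeight p e f k = ∑ σ, k σ * (p : ℤ) ^ σ.1.val :=
  Fintype.linearCombination_apply ..

theorem charWeight_single (σ : Idx e f) :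
    charWeight p e f (Pi.single σ 1) = (p : ℤ) ^ σ.1.val := by
  simp [charWeight]

theorem pow_sub_one_dvd_nu_mul_sub (σ : Idx e f) :
    (p : ℤ) ^ f - 1 ∣ nu p e f σ * (p : ℤ) ^ (phiInv e f σ).1.val - (p : ℤ) ^ σ.1.val := by
  by_cases hσ : (σ.2 : ℕ) = 0
  · have hval : (σ.1 - 1).val + 1 ≡ σ.1.val [MOD f] := by
      rw [← ZMod.natCast_eq_natCast_iff]
      simp
    simpa [nu, phiInv, hσ, ← pow_succ'] using pow_sub_one_dvd_pow_sub_pow_of_modEq (p : ℤ) hval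
  · simp [nu, phiInv, hσ]

theorem charWeight_mem_span_of_mem_hasseLattice {k : Idx e f → ℤ}
    (hk : k ∈ hasseLattice p e f) : charWeight p e f k ∈ Ideal.span {(p : ℤ) ^ f - 1} := by
  suffices hasseLattice p e f ≤
      Submodule.comap (charWeight p e f) (Ideal.span {(p : ℤ) ^ f - 1}) from this hk
  refine Submodule.span_le.mpr (Set.range_subset_iff.mpr fun σ => ?_)
  rw [SetLike.mem_coe, Submodule.mem_comap, Ideal.mem_span_singleton, hvec_eq_sub, map_sub,
    map_smul, charWeight_single, charWeight_single, smul_eq_mul]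
  exact pow_sub_one_dvd_nu_mul_sub σ

theorem mk_single_eq_pow_smul (he : 0 < e) (σ : Idx e f) :
    (cls σ) = (p : ℤ) ^ σ.1.val • cls ((0 : ZMod f), ⟨0, he⟩) := by
  rw [← mk_single_natCast_eq_pow_smul he, ZMod.natCast_zmod_val]
  exact mk_single_eq_mk_single_zero he σ.1 σ.2

theorem mk_eq_charWeight_smul (he : 0 < e) (k : Idx e f → ℤ) :
    Submodule.Quotient.mk (p := hasseLattice p e f) k =
      charWeight p e f k • cls ((0 : ZMod f), ⟨0, he⟩) := by
  conv_lhs => rw [pi_eq_sum_univ' k, ← Submodule.mkQ_apply, map_sum]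
  rw [charWeight_apply, Finset.sum_smul]
  refine Finset.sum_congr rfl fun σ _ => ?_
  rw [map_smul, Submodule.mkQ_apply, mk_single_eq_pow_smul he, smul_smul]

theorem mem_hasseLattice_iff_dvd_charWeight (he : 0 < e) (k : Idx e f → ℤ) :
    k ∈ hasseLattice p e f ↔ (p : ℤ) ^ f - 1 ∣ charWeight p e f k := by
  refine ⟨fun hk => Ideal.mem_span_singleton.mp (charWeight_mem_span_of_mem_hasseLattice hk),
    fun ⟨D, hD⟩ => ?_⟩
  rw [← Submodule.Quotient.mk_eq_zero, mk_eq_charWeight_smul he, hD, mul_comm, mul_smul,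
    pow_sub_one_smul_mk_single_zero, smul_zero]

end HasseLattice

theorem mem_hasse_lattice_iff_general (p e f : ℕ) (he : 0 < e) [NeZero f]
    (k : Idx e f → ℤ) :
    (∃ c : Idx e f → ℤ, ∀ ρ : Idx e f, k ρ = ∑ σ : Idx e f, c σ * hvec p e f σ ρ) ↔
      ((p : ℤ) ^ f - 1) ∣ ∑ σ : Idx e f, k σ * (p : ℤ) ^ (σ.1.val) := by
  rw [← charWeight_apply, ← mem_hasseLattice_iff_dvd_charWeight he,
    Submodule.mem_span_range_iff_exists_fun]
  simp only [funext_iff, Finset.sum_apply, Pi.smul_apply, smul_eq_mul, eq_comm]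

/-- A vector `k ∈ ℤ^I` lies in the subgroup `Σ_{σ∈I} ℤ·h_σ` generated by the partial
Hasse invariant weight vectors if and only if
`Σ_{(i,j)∈I} k_{(i,j)}·p^ĩ ≡ 0 (mod p^f − 1)`, where `ĩ ∈ {0,…,f−1}` is the
representative of `i ∈ ℤ/fℤ`. -/
theorem mem_hasse_lattice_iff (p e f : ℕ) (hp : p.Prime) (he : 0 < e) [NeZero f]
    (k : Idx e f → ℤ) :
    (∃ c : Idx e f → ℤ, ∀ ρ : Idx e f, k ρ = ∑ σ : Idx e f, c σ * hvec p e f σ ρ) ↔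
      ((p : ℤ) ^ f - 1) ∣ ∑ σ : Idx e f, k σ * (p : ℤ) ^ (σ.1.val) :=
  mem_hasse_lattice_iff_general p e f he k
end

section
/- Let p ≥ 3 be a prime, let a₁, a₂ ≥ 0 be integers, and set k₁ = p + a₁ − a₂ and k₂ = p + 1 − p·a₁ + a₂ (i.e. (k₁,k₂) = (p, p+1) − a₁·h₁ − a₂·h₂). Assume 0 < k₁, k₁ ≤ k₂, and k₂ ≤ p·k₁. Then: (i) if a₂ ≥ p + 1, then a₁ = 2, a₂ = p + 1 and (k₁,k₂) = (1,2); (ii) if a₂ ≤ p and p divides k₂, then a₁ = 1, a₂ = p − 1 and (k₁,k₂) = (2,p). (This is the elementary Diophantine step in the paper's proof of partial weight (1,2) modularity for a ramified quadratic field.) -/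
/-!
Modulo `p`, `k₂ ≡ 1 + a₂`; when `a₂ ≤ p` this forces `1 + a₂ = p`, and the two cone inequalities
then pin `a₁` between `1/2` and `(2p - 1)/(p + 1) < 2`. When `a₂ ≥ p + 1`, positivity of `k₁`
gives `a₁ ≥ 2`, while `k₁ ≤ k₂` combined with `a₂ < p + a₁` gives `(p - 1) a₁ ≤ 2p - 1`, so
`a₁ ≤ 2` as soon as `p ≥ 3`.
-/

theorem Int.eq_of_dvd_of_lt_two_mul {a b : ℤ} (ha : 0 < a) (hdvd : b ∣ a) (hlt : a < 2 * b) :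
    a = b := by
  obtain ⟨m, rfl⟩ := hdvd
  have hb : 0 < b := by nlinarith
  have hm_pos : 0 < m := pos_of_mul_pos_right ha hb.le
  have hm_lt : m < 2 := lt_of_mul_lt_mul_left (by linarith) hb.le
  obtain rfl : m = 1 := by omega
  exact mul_one b

namespace RamifiedQuadraticWeight

variable {p a₁ a₂ : ℤ}

theorem eq_of_add_one_le_a₂ (hp : 3 ≤ p) (h0 : 0 < p + a₁ - a₂)
    (h12 : p + a₁ - a₂ ≤ p + 1 - p * a₁ + a₂) (ha₂ : p + 1 ≤ a₂) :
    a₁ = 2 ∧ a₂ = p + 1 := by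
  have h_two_le : 2 ≤ a₁ := by linarith
  have h_bound : (p - 1) * a₁ ≤ 2 * p - 1 := by linarith
  have h_le_two : a₁ ≤ 2 := by nlinarith
  obtain rfl : a₁ = 2 := le_antisymm h_le_two h_two_le
  exact ⟨rfl, by linarith⟩

theorem a₂_eq_sub_one_of_dvd (hp : 2 ≤ p) (ha₂ : 0 ≤ a₂) (ha₂p : a₂ ≤ p)
    (hdvd : p ∣ p + 1 - p * a₁ + a₂) : a₂ = p - 1 := by
  have hdvd' : p ∣ 1 + a₂ := by
    have h : 1 + a₂ = (p + 1 - p * a₁ + a₂) - p * (1 - a₁) := by ring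
    rw [h]
    exact dvd_sub hdvd (dvd_mul_right p _)
  have := Int.eq_of_dvd_of_lt_two_mul (by linarith) hdvd' (by linarith)
  linarith

theorem a₁_eq_one (hp : 0 < p) (h12 : a₁ + 1 ≤ 2 * p - p * a₁) (h2p : 2 * p - p * a₁ ≤ p * (a₁ + 1)) :
    a₁ = 1 := by
  have h_le_one : a₁ ≤ 1 := by nlinarith
  have h_one_le : 1 ≤ a₁ := by nlinarith
  exact le_antisymm h_le_one h_one_le

end RamifiedQuadraticWeight

open RamifiedQuadraticWeight in
theorem ramified_quadratic_weight_descent_general (p : ℕ) (hp3 : 3 ≤ p)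
    (a₁ a₂ k₁ k₂ : ℤ) (ha₂ : 0 ≤ a₂)
    (hk₁ : k₁ = (p : ℤ) + a₁ - a₂) (hk₂ : k₂ = (p : ℤ) + 1 - (p : ℤ) * a₁ + a₂)
    (h0 : 0 < k₁) (h12 : k₁ ≤ k₂) (h2p : k₂ ≤ (p : ℤ) * k₁) :
    ((p : ℤ) + 1 ≤ a₂ → a₁ = 2 ∧ a₂ = (p : ℤ) + 1 ∧ k₁ = 1 ∧ k₂ = 2) ∧
    (a₂ ≤ (p : ℤ) ∧ (p : ℤ) ∣ k₂ → a₁ = 1 ∧ a₂ = (p : ℤ) - 1 ∧ k₁ = 2 ∧ k₂ = (p : ℤ)) := by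
  have hp : (3 : ℤ) ≤ p := by exact_mod_cast hp3
  subst hk₁ hk₂
  constructor
  · intro ha₂_large
    obtain ⟨rfl, rfl⟩ := eq_of_add_one_le_a₂ hp h0 h12 ha₂_large
    exact ⟨rfl, rfl, by ring, by ring⟩
  · rintro ⟨ha₂p, hdvd⟩
    obtain rfl := a₂_eq_sub_one_of_dvd (by linarith) ha₂ ha₂p hdvd
    obtain rfl := a₁_eq_one (p := p) (a₁ := a₁) (by linarith) (by linarith) (by linarith)
    exact ⟨rfl, rfl, by ring, by ring⟩

/-- Let `p ≥ 3` be a prime, `a₁, a₂ ≥ 0` integers, and set `k₁ = p + a₁ − a₂`,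
`k₂ = p + 1 − p·a₁ + a₂` (so `(k₁,k₂) = (p,p+1) − a₁·h₁ − a₂·h₂`).  Assume
`0 < k₁`, `k₁ ≤ k₂` and `k₂ ≤ p·k₁`.  Then: (i) if `a₂ ≥ p + 1`, then `a₁ = 2`,
`a₂ = p + 1` and `(k₁,k₂) = (1,2)`; (ii) if `a₂ ≤ p` and `p ∣ k₂`, then `a₁ = 1`,
`a₂ = p − 1` and `(k₁,k₂) = (2,p)`. -/
theorem ramified_quadratic_weight_descent (p : ℕ) (hp : p.Prime) (hp3 : 3 ≤ p)
    (a₁ a₂ k₁ k₂ : ℤ) (ha₁ : 0 ≤ a₁) (ha₂ : 0 ≤ a₂)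
    (hk₁ : k₁ = (p : ℤ) + a₁ - a₂) (hk₂ : k₂ = (p : ℤ) + 1 - (p : ℤ) * a₁ + a₂)
    (h0 : 0 < k₁) (h12 : k₁ ≤ k₂) (h2p : k₂ ≤ (p : ℤ) * k₁) :
    ((p : ℤ) + 1 ≤ a₂ → a₁ = 2 ∧ a₂ = (p : ℤ) + 1 ∧ k₁ = 1 ∧ k₂ = 2) ∧
    (a₂ ≤ (p : ℤ) ∧ (p : ℤ) ∣ k₂ → a₁ = 1 ∧ a₂ = (p : ℤ) - 1 ∧ k₁ = 2 ∧ k₂ = (p : ℤ)) :=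
  ramified_quadratic_weight_descent_general p hp3 a₁ a₂ k₁ k₂ ha₂ hk₁ hk₂ h0 h12 h2p
end

section
/- Let 𝒪 be a discrete valuation ring, let A be a commutative 𝒪-algebra, and let M be a nonzero A-module which, as an 𝒪-module (via the structure map 𝒪 → A), is finitely generated and torsion-free. Then for every prime ideal 𝔪 of A containing the annihilator Ann_A(M), there exists a prime ideal 𝔭 of A with 𝔭 ⊆ 𝔪, Ann_A(M) ⊆ 𝔭 (so 𝔭 lies in the support of M), and 𝔭 ∩ 𝒪 = (0). (This is the Deligne–Serre style lifting mechanism used repeatedly in the paper to lift systems of mod p Hecke eigenvalues occurring in a torsion-free module over a Hecke algebra to characteristic-zero systems of eigenvalues.) -/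
/-!
Torsion-freeness makes every nonzero `r ∈ 𝒪` act injectively on `M`, so `y * r ∈ Ann_A(M)`
forces `y ∈ Ann_A(M) ⊆ 𝔪`. Hence `Ann_A(M)` avoids the multiplicative set `(A ∖ 𝔪) · (𝒪 ∖ 0)`,
and an ideal containing `Ann_A(M)` maximal among those avoiding this set is a prime inside `𝔪`
that meets `𝒪` only in `0`.
-/

theorem Ideal.exists_isPrime_le_of_disjoint_primeCompl_sup {A : Type*} [CommSemiring A]
    {I 𝔪 : Ideal A} [𝔪.IsPrime] {T : Submonoid A}
    (h : Disjoint (I : Set A) ↑(𝔪.primeCompl ⊔ T)) :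
    ∃ 𝔭 : Ideal A, 𝔭.IsPrime ∧ I ≤ 𝔭 ∧ 𝔭 ≤ 𝔪 ∧ Disjoint (𝔭 : Set A) T := by
  obtain ⟨𝔭, h𝔭, hI, hdisj⟩ := Ideal.exists_le_prime_disjoint I _ h
  have h𝔭𝔪 : Disjoint (𝔭 : Set A) (𝔪 : Set A)ᶜ :=
    hdisj.mono_right (SetLike.coe_mono (le_sup_left : 𝔪.primeCompl ≤ _))
  exact ⟨𝔭, h𝔭, hI, Set.disjoint_compl_right_iff_subset.mp h𝔭𝔪,
    hdisj.mono_right (SetLike.coe_mono le_sup_right)⟩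

namespace Module

variable {R A M : Type*} [CommRing R] [CommRing A] [Algebra R A]
  [AddCommGroup M] [Module A M] [Module R M] [IsScalarTower R A M] [IsTorsionFree R M]

theorem mem_annihilator_of_algebraMap_mul_mem {r : R} (hr : r ∈ nonZeroDivisors R) {a : A}
    (h : algebraMap R A r * a ∈ annihilator A M) : a ∈ annihilator A M := by
  rw [mem_annihilator] at h ⊢
  intro m
  have hrm : r • a • m = 0 := by rw [← algebraMap_smul A r, ← mul_smul]; exact h m
  exact (isRegular_iff_mem_nonZeroDivisors.mpr hr).smul_eq_zero_iff_right.mp hrm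

theorem disjoint_annihilator_primeCompl_sup_algebraMapSubmonoid
    {𝔪 : Ideal A} [𝔪.IsPrime] (h : annihilator A M ≤ 𝔪) :
    Disjoint (annihilator A M : Set A)
      ↑(𝔪.primeCompl ⊔ Algebra.algebraMapSubmonoid A (nonZeroDivisors R)) := by
  rw [Set.disjoint_left]
  rintro a ha hS
  obtain ⟨y, hy, _, ⟨r, hr, rfl⟩, rfl⟩ := Submonoid.mem_sup.mp hS
  exact hy (h (mem_annihilator_of_algebraMap_mul_mem hr (by rwa [mul_comm])))

end Module

theorem exists_char_zero_prime_in_support_general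
    (𝒪 A M : Type*) [CommRing 𝒪] [IsDomain 𝒪]
    [CommRing A] [Algebra 𝒪 A]
    [AddCommGroup M] [Module A M] [Module 𝒪 M] [IsScalarTower 𝒪 A M]
    [NoZeroSMulDivisors 𝒪 M]
    (𝔪 : Ideal A) (h𝔪 : 𝔪.IsPrime) (hann : Module.annihilator A M ≤ 𝔪) :
    ∃ 𝔭 : Ideal A, 𝔭.IsPrime ∧ 𝔭 ≤ 𝔪 ∧ Module.annihilator A M ≤ 𝔭 ∧
      Ideal.comap (algebraMap 𝒪 A) 𝔭 = ⊥ := by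
  obtain ⟨𝔭, h𝔭, hann𝔭, h𝔭𝔪, hdisj⟩ := Ideal.exists_isPrime_le_of_disjoint_primeCompl_sup
    (Module.disjoint_annihilator_primeCompl_sup_algebraMapSubmonoid (R := 𝒪) hann)
  refine ⟨𝔭, h𝔭, h𝔭𝔪, hann𝔭, eq_bot_iff.mpr fun r hr => ?_⟩
  by_contra hr0
  exact Set.disjoint_left.mp hdisj hr
    (Algebra.mem_algebraMapSubmonoid_of_mem ⟨r, mem_nonZeroDivisors_of_ne_zero hr0⟩)

/-- Deligne–Serre lifting mechanism.  Let `𝒪` be a discrete valuation ring, `A` a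
commutative `𝒪`-algebra, and `M` a nonzero `A`-module which, as an `𝒪`-module (via
the structure map `𝒪 → A`), is finitely generated and torsion-free.  Then for every
prime ideal `𝔪` of `A` containing `Ann_A(M)`, there is a prime ideal `𝔭 ⊆ 𝔪` of `A`
with `Ann_A(M) ⊆ 𝔭` (so `𝔭` lies in the support of `M`) and `𝔭 ∩ 𝒪 = (0)`. -/
theorem exists_char_zero_prime_in_support
    (𝒪 A M : Type*) [CommRing 𝒪] [IsDomain 𝒪] [IsDiscreteValuationRing 𝒪]
    [CommRing A] [Algebra 𝒪 A]
    [AddCommGroup M] [Module A M] [Module 𝒪 M] [IsScalarTower 𝒪 A M]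
    [Nontrivial M] [Module.Finite 𝒪 M] [NoZeroSMulDivisors 𝒪 M]
    (𝔪 : Ideal A) (h𝔪 : 𝔪.IsPrime) (hann : Module.annihilator A M ≤ 𝔪) :
    ∃ 𝔭 : Ideal A, 𝔭.IsPrime ∧ 𝔭 ≤ 𝔪 ∧ Module.annihilator A M ≤ 𝔭 ∧
      Ideal.comap (algebraMap 𝒪 A) 𝔭 = ⊥ :=
  exists_char_zero_prime_in_support_general 𝒪 A M 𝔪 h𝔪 hann
end
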